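/- arXiv:2501.13482 — 4 statements merged into one kernel-verified Lean document; each statement's English description precedes it below -/
import Mathlib

section
/- For any two unit vectors |a⟩, |b⟩ in a Hilbert space and any operator O with 0 ≤ O ≤ 1, the quantity Tr[O|b⟩⟨b|] satisfies G₋(Tr[O|a⟩⟨a|], |⟨a|b⟩|²) ≤ Tr[O|b⟩⟨b|] ≤ G₊(Tr[O|a⟩⟨a|], |⟨a|b⟩|²), where g±(x,y) = x + (1−2x)(1−y) ± 2√(x(1−x)y(1−y)), G₋(x,y) = g₋(x,y) if x > 1−y and 0 otherwise, and G₊(x,y) = 1 if x ≥ y and g₊(x,y) otherwise. -/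
/-!
Write `x = cos² A`, `z = cos² B` for the probabilities of the outcome `O` in the states `a`, `b`,
and `|⟪a, b⟫| = cos C`, with `A, B, C ∈ [0, π/2]`. Cauchy–Schwarz for the semi-inner products
`⟪u, O v⟫` and `⟪u, (1 - O) v⟫`, added up, bounds the overlap by the Bhattacharyya coefficient of
the outcome statistics: `cos C ≤ √(xz) + √((1-x)(1-z)) = cos (A - B)`, i.e. `|A - B| ≤ C`.
As `g± = cos² (A ∓ C)`, the bounds `G∓` are the extreme values of `cos² B` on that range of `B`.
-/

open scoped InnerProductSpace

noncomputable def gPlus (x y : ℝ) : ℝ := x + (1 - 2*x)*(1 - y) + 2*Real.sqrt (x*(1 - x)*y*(1 - y))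
noncomputable def gMinus (x y : ℝ) : ℝ := x + (1 - 2*x)*(1 - y) - 2*Real.sqrt (x*(1 - x)*y*(1 - y))
noncomputable def GMinus (x y : ℝ) : ℝ := if x > 1 - y then gMinus x y else 0
noncomputable def GPlus (x y : ℝ) : ℝ := if x ≥ y then 1 else gPlus x y

open RCLike

namespace LinearMap.IsPositive

variable {𝕜 E : Type*} [RCLike 𝕜] [NormedAddCommGroup E] [InnerProductSpace 𝕜 E]
  {S T : E →ₗ[𝕜] E}

abbrev preInnerProductSpaceCore (hT : T.IsPositive) : PreInnerProductSpace.Core 𝕜 E where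
  inner u v := ⟪u, T v⟫_𝕜
  conj_inner_symm u v := by rw [inner_conj_symm, hT.isSymmetric]
  re_inner_nonneg := hT.re_inner_nonneg_right
  add_left u v w := inner_add_left u v (T w)
  smul_left u v r := inner_smul_left u (T v) r

theorem norm_inner_le_sqrt_mul_sqrt (hT : T.IsPositive) (u v : E) :
    ‖⟪u, T v⟫_𝕜‖ ≤ √(re ⟪u, T u⟫_𝕜) * √(re ⟪v, T v⟫_𝕜) :=
  @InnerProductSpace.Core.norm_inner_le_norm 𝕜 E _ _ _ hT.preInnerProductSpaceCore u v

theorem norm_inner_add_apply_le (hS : S.IsPositive) (hT : T.IsPositive) (u v : E) :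
    ‖⟪u, (S + T) v⟫_𝕜‖ ≤ √(re ⟪u, S u⟫_𝕜) * √(re ⟪v, S v⟫_𝕜)
      + √(re ⟪u, T u⟫_𝕜) * √(re ⟪v, T v⟫_𝕜) := by
  rw [add_apply, inner_add_right]
  exact (norm_add_le _ _).trans
    (add_le_add (hS.norm_inner_le_sqrt_mul_sqrt u v) (hT.norm_inner_le_sqrt_mul_sqrt u v))

end LinearMap.IsPositive

namespace ContinuousLinearMap

variable {𝕜 E : Type*} [RCLike 𝕜] [NormedAddCommGroup E] [InnerProductSpace 𝕜 E]

theorem re_inner_one_sub_apply_self {u : E} (hu : ‖u‖ = 1) (T : E →L[𝕜] E) :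
    re ⟪u, (1 - T) u⟫_𝕜 = 1 - re ⟪u, T u⟫_𝕜 := by
  simp [inner_sub_right, inner_self_eq_norm_sq_to_K, hu]

theorem re_inner_apply_self_mem_Icc {u : E} (hu : ‖u‖ = 1) {T : E →L[𝕜] E}
    (hT : T.IsPositive) (hT1 : (1 - T).IsPositive) :
    re ⟪u, T u⟫_𝕜 ∈ Set.Icc 0 1 := by
  have := hT1.re_inner_nonneg_right u
  rw [re_inner_one_sub_apply_self hu] at this
  exact ⟨hT.re_inner_nonneg_right u, by linarith⟩

theorem norm_inner_le_of_isPositive {u v : E} (hu : ‖u‖ = 1) (hv : ‖v‖ = 1) {T : E →L[𝕜] E}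
    (hT : T.IsPositive) (hT1 : (1 - T).IsPositive) :
    ‖⟪u, v⟫_𝕜‖ ≤ √(re ⟪u, T u⟫_𝕜) * √(re ⟪v, T v⟫_𝕜)
      + √(1 - re ⟪u, T u⟫_𝕜) * √(1 - re ⟪v, T v⟫_𝕜) := by
  rw [← re_inner_one_sub_apply_self hu, ← re_inner_one_sub_apply_self hv]
  simpa using hT.toLinearMap.norm_inner_add_apply_le hT1.toLinearMap u v

end ContinuousLinearMap

open Real Set

section Angles

variable {A B C : ℝ}

theorem cos_nonneg_of_mem_Icc_zero_pi_div_two (hA : A ∈ Icc 0 (π / 2)) : 0 ≤ cos A :=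
  cos_nonneg_of_mem_Icc ⟨by linarith [hA.1, pi_pos], hA.2⟩

theorem sin_nonneg_of_mem_Icc_zero_pi_div_two (hA : A ∈ Icc 0 (π / 2)) : 0 ≤ sin A :=
  sin_nonneg_of_nonneg_of_le_pi hA.1 (by linarith [hA.2, pi_pos])

theorem sqrt_cos_sq_mul_sin_sq (hA : A ∈ Icc 0 (π / 2)) (hC : C ∈ Icc 0 (π / 2)) :
    √(cos A ^ 2 * (1 - cos A ^ 2) * cos C ^ 2 * (1 - cos C ^ 2))
      = cos A * sin A * (cos C * sin C) := by
  rw [← sin_sq, ← sin_sq, show ∀ p q r s : ℝ, p ^ 2 * q ^ 2 * r ^ 2 * s ^ 2 = (p * q * (r * s)) ^ 2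
    by intros; ring]
  have := cos_nonneg_of_mem_Icc_zero_pi_div_two hA
  have := sin_nonneg_of_mem_Icc_zero_pi_div_two hA
  have := cos_nonneg_of_mem_Icc_zero_pi_div_two hC
  have := sin_nonneg_of_mem_Icc_zero_pi_div_two hC
  exact sqrt_sq (by positivity)

theorem gPlus_cos_sq (hA : A ∈ Icc 0 (π / 2)) (hC : C ∈ Icc 0 (π / 2)) :
    gPlus (cos A ^ 2) (cos C ^ 2) = cos (A - C) ^ 2 := by
  rw [gPlus, sqrt_cos_sq_mul_sin_sq hA hC, cos_sub]
  linear_combination (cos A ^ 2 - 1) * sin_sq_add_cos_sq C - sin C ^ 2 * sin_sq_add_cos_sq A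

theorem gMinus_cos_sq (hA : A ∈ Icc 0 (π / 2)) (hC : C ∈ Icc 0 (π / 2)) :
    gMinus (cos A ^ 2) (cos C ^ 2) = cos (A + C) ^ 2 := by
  rw [gMinus, sqrt_cos_sq_mul_sin_sq hA hC, cos_add]
  linear_combination (cos A ^ 2 - 1) * sin_sq_add_cos_sq C - sin C ^ 2 * sin_sq_add_cos_sq A

theorem cos_sq_le_GPlus (hA : A ∈ Icc 0 (π / 2)) (hB : B ∈ Icc 0 (π / 2))
    (hC : C ∈ Icc 0 (π / 2)) (hAB : |A - B| ≤ C) :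
    cos B ^ 2 ≤ GPlus (cos A ^ 2) (cos C ^ 2) := by
  rw [GPlus]
  split_ifs with hAC
  · exact cos_sq_le_one B
  · have hCA : C < A := by
      rw [not_le, pow_lt_pow_iff_left₀ (cos_nonneg_of_mem_Icc_zero_pi_div_two hA)
        (cos_nonneg_of_mem_Icc_zero_pi_div_two hC) two_ne_zero] at hAC
      exact (strictAntiOn_cos.lt_iff_gt ⟨hA.1, by linarith [hA.2, pi_pos]⟩
        ⟨hC.1, by linarith [hC.2, pi_pos]⟩).1 hAC
    rw [gPlus_cos_sq hA hC]
    exact pow_le_pow_left₀ (cos_nonneg_of_mem_Icc_zero_pi_div_two hB)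
      (cos_le_cos_of_nonneg_of_le_pi (by linarith) (by linarith [hB.2, pi_pos])
        (by linarith [le_abs_self (A - B)])) 2

theorem GMinus_le_cos_sq (hA : A ∈ Icc 0 (π / 2)) (hB : B ∈ Icc 0 (π / 2))
    (hC : C ∈ Icc 0 (π / 2)) (hAB : |A - B| ≤ C) :
    GMinus (cos A ^ 2) (cos C ^ 2) ≤ cos B ^ 2 := by
  rw [GMinus]
  split_ifs with hAC
  · have hC' : π / 2 - C ∈ Icc 0 (π / 2) := ⟨by linarith [hC.2], by linarith [hC.1]⟩
    have hAC' : A + C < π / 2 := by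
      rw [← sin_sq, ← cos_pi_div_two_sub, gt_iff_lt,
        pow_lt_pow_iff_left₀ (cos_nonneg_of_mem_Icc_zero_pi_div_two hC')
          (cos_nonneg_of_mem_Icc_zero_pi_div_two hA) two_ne_zero] at hAC
      have := (strictAntiOn_cos.lt_iff_gt ⟨hC'.1, by linarith [hC'.2, pi_pos]⟩
        ⟨hA.1, by linarith [hA.2, pi_pos]⟩).1 hAC
      linarith
    rw [gMinus_cos_sq hA hC]
    exact pow_le_pow_left₀ (cos_nonneg_of_mem_Icc_zero_pi_div_two ⟨by linarith [hA.1, hC.1],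
      hAC'.le⟩) (cos_le_cos_of_nonneg_of_le_pi hB.1 (by linarith [pi_pos])
        (by linarith [neg_abs_le (A - B)])) 2
  · positivity

end Angles

theorem exists_cos_eq_sqrt_sin_eq_sqrt {x : ℝ} (hx : x ∈ Icc 0 1) :
    ∃ A ∈ Icc 0 (π / 2), cos A = √x ∧ sin A = √(1 - x) :=
  ⟨arccos √x, ⟨arccos_nonneg _, arccos_le_pi_div_two.2 (sqrt_nonneg x)⟩,
    cos_arccos (by linarith [sqrt_nonneg x]) (sqrt_le_one.2 hx.2), by rw [sin_arccos, sq_sqrt hx.1]⟩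

theorem GMinus_le_and_le_GPlus_of_le_sqrt {x z s : ℝ} (hx : x ∈ Icc 0 1) (hz : z ∈ Icc 0 1)
    (hs : 0 ≤ s) (h : s ≤ √x * √z + √(1 - x) * √(1 - z)) :
    GMinus x (s ^ 2) ≤ z ∧ z ≤ GPlus x (s ^ 2) := by
  obtain ⟨A, hA, hcosA, hsinA⟩ := exists_cos_eq_sqrt_sin_eq_sqrt hx
  obtain ⟨B, hB, hcosB, hsinB⟩ := exists_cos_eq_sqrt_sin_eq_sqrt hz
  rw [← hcosA, ← hsinA, ← hcosB, ← hsinB, ← cos_sub, ← cos_abs] at h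
  have hs1 : s ≤ 1 := h.trans (cos_le_one _)
  have hC : arccos s ∈ Icc 0 (π / 2) := ⟨arccos_nonneg s, arccos_le_pi_div_two.2 hs⟩
  have hAB : |A - B| ≤ arccos s := by
    rw [← cos_arccos (by linarith) hs1] at h
    refine (strictAntiOn_cos.le_iff_ge ⟨hC.1, by linarith [hC.2, pi_pos]⟩ ⟨abs_nonneg _, ?_⟩).1 h
    rw [abs_sub_le_iff]
    constructor <;> linarith [hA.1, hA.2, hB.1, hB.2, pi_pos]
  have hx' : x = cos A ^ 2 := by rw [hcosA, sq_sqrt hx.1]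
  have hz' : z = cos B ^ 2 := by rw [hcosB, sq_sqrt hz.1]
  rw [hx', hz', ← cos_arccos (by linarith) hs1]
  exact ⟨GMinus_le_cos_sq hA hB hC hAB, cos_sq_le_GPlus hA hB hC hAB⟩

theorem stmt0_general {H : Type*} [NormedAddCommGroup H] [InnerProductSpace ℂ H]
    (a b : H) (ha : ‖a‖ = 1) (hb : ‖b‖ = 1) (O : H →L[ℂ] H)
    (hO : O.IsPositive) (hO1 : (1 - O).IsPositive) :
    GMinus (⟪a, O a⟫_ℂ).re (‖⟪a, b⟫_ℂ‖^2) ≤ (⟪b, O b⟫_ℂ).re ∧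
    (⟪b, O b⟫_ℂ).re ≤ GPlus (⟪a, O a⟫_ℂ).re (‖⟪a, b⟫_ℂ‖^2) :=
  GMinus_le_and_le_GPlus_of_le_sqrt (ContinuousLinearMap.re_inner_apply_self_mem_Icc ha hO hO1)
    (ContinuousLinearMap.re_inner_apply_self_mem_Icc hb hO hO1) (norm_nonneg _)
    (ContinuousLinearMap.norm_inner_le_of_isPositive ha hb hO hO1)

/-- Cauchy–Schwarz constraint on the statistics of two pure states under one POVM element. -/
theorem stmt0 {H : Type*} [NormedAddCommGroup H] [InnerProductSpace ℂ H] [CompleteSpace H]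
    (a b : H) (ha : ‖a‖ = 1) (hb : ‖b‖ = 1) (O : H →L[ℂ] H)
    (hO : O.IsPositive) (hO1 : (1 - O).IsPositive) :
    GMinus (⟪a, O a⟫_ℂ).re (‖⟪a, b⟫_ℂ‖^2) ≤ (⟪b, O b⟫_ℂ).re ∧
    (⟪b, O b⟫_ℂ).re ≤ GPlus (⟪a, O a⟫_ℂ).re (‖⟪a, b⟫_ℂ‖^2) :=
  stmt0_general a b ha hb O hO hO1
end

section
/- For fixed y ∈ [0,1], the function x ↦ G₊(x,y) is concave on [0,1], where G₊(x,y) = 1 for x ≥ y and G₊(x,y) = x + (1−2x)(1−y) + 2√(x(1−x)y(1−y)) for x < y. -/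
open Set

theorem ConcaveOn.comp_of_mapsTo {𝕜 E α β : Type*} [Semiring 𝕜] [PartialOrder 𝕜]
    [AddCommMonoid E] [AddCommMonoid α] [PartialOrder α] [AddCommMonoid β] [PartialOrder β]
    [SMul 𝕜 E] [SMul 𝕜 α] [SMul 𝕜 β] {s : Set E} {t : Set β} {f : E → β} {g : β → α}
    (hg : ConcaveOn 𝕜 t g) (hf : ConcaveOn 𝕜 s f) (hg' : MonotoneOn g t) (hst : MapsTo f s t) :
    ConcaveOn 𝕜 s (g ∘ f) :=
  ⟨hf.1, fun _ hx _ hy _ _ ha hb hab =>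
    (hg.2 (hst hx) (hst hy) ha hb hab).trans <|
      hg' (hg.1 (hst hx) (hst hy) ha hb hab) (hst <| hf.1 hx hy ha hb hab) (hf.2 hx hy ha hb hab)⟩

theorem ConcaveOn.monotoneOn_of_isMaxOn {𝕜 β : Type*} [Field 𝕜] [LinearOrder 𝕜]
    [IsStrictOrderedRing 𝕜] [AddCommGroup β] [LinearOrder β] [IsOrderedAddMonoid β] [Module 𝕜 β]
    [IsStrictOrderedModule 𝕜 β] {s : Set 𝕜} {f : 𝕜 → β} {d : 𝕜} (hf : ConcaveOn 𝕜 s f)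
    (hd : IsGreatest s d) (hmax : IsMaxOn f s d) : MonotoneOn f s := by
  intro a ha b hb hab
  have hmin := hf.min_le_of_mem_Icc ha hd.1 ⟨hab, hd.2 hb⟩
  rwa [min_eq_left (hmax ha)] at hmin

theorem concaveOn_sqrt_mul_one_sub :
    ConcaveOn ℝ (Icc 0 1) (fun x : ℝ => √(x * (1 - x))) := by
  have hquad : ConcaveOn ℝ (Icc 0 1) (fun x : ℝ => x * (1 - x)) :=
    ((concaveOn_id (convex_Icc 0 1)).sub ((convexOn_pow 2).subset Icc_subset_Ici_self
      (convex_Icc 0 1))).congr fun x _ => by simp only [Pi.sub_apply, id]; ring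
  refine Real.strictConcaveOn_sqrt.concaveOn.comp_of_mapsTo hquad
    (Real.sqrt_monotone.monotoneOn _) ?_
  rintro x ⟨hx0, hx1⟩
  exact mul_nonneg hx0 (sub_nonneg.2 hx1)

section

variable {x y : ℝ}

theorem gPlus_eq (hy : y ∈ Icc (0 : ℝ) 1) :
    gPlus x y = (2 * y - 1) * x + (1 - y) + 2 * √(y * (1 - y)) * √(x * (1 - x)) := by
  have hy' : 0 ≤ y * (1 - y) := mul_nonneg hy.1 (sub_nonneg.2 hy.2)
  rw [gPlus, show x * (1 - x) * y * (1 - y) = x * (1 - x) * (y * (1 - y)) by ring,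
    Real.sqrt_mul' _ hy']
  ring

theorem one_sub_gPlus (hx : x ∈ Icc (0 : ℝ) 1) (hy : y ∈ Icc (0 : ℝ) 1) :
    1 - gPlus x y = (√(x * (1 - y)) - √(y * (1 - x))) ^ 2 := by
  have hu : 0 ≤ x * (1 - y) := mul_nonneg hx.1 (sub_nonneg.2 hy.2)
  have hv : 0 ≤ y * (1 - x) := mul_nonneg hy.1 (sub_nonneg.2 hx.2)
  rw [gPlus, show x * (1 - x) * y * (1 - y) = x * (1 - y) * (y * (1 - x)) by ring,
    Real.sqrt_mul hu, sub_sq, Real.sq_sqrt hu, Real.sq_sqrt hv]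
  ring

theorem gPlus_le_one (hx : x ∈ Icc (0 : ℝ) 1) (hy : y ∈ Icc (0 : ℝ) 1) : gPlus x y ≤ 1 :=
  sub_nonneg.1 <| (one_sub_gPlus hx hy).symm ▸ sq_nonneg _

theorem gPlus_self (hy : y ∈ Icc (0 : ℝ) 1) : gPlus y y = 1 := by
  linarith [one_sub_gPlus hy hy]

theorem concaveOn_gPlus (hy : y ∈ Icc (0 : ℝ) 1) : ConcaveOn ℝ (Icc 0 1) (gPlus · y) := by
  have haffine : ConcaveOn ℝ (Icc 0 1) (fun x : ℝ => (2 * y - 1) * x + (1 - y)) :=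
    ⟨convex_Icc 0 1, fun _ _ _ _ a b _ _ hab => le_of_eq <| by
      simp only [smul_eq_mul]; linear_combination (1 - y) * hab⟩
  have hsqrt := concaveOn_sqrt_mul_one_sub.smul (c := 2 * √(y * (1 - y))) (by positivity)
  exact (haffine.add hsqrt).congr fun x _ => by simp [gPlus_eq hy]

theorem GPlus_eq_gPlus_min (hy : y ∈ Icc (0 : ℝ) 1) : GPlus x y = gPlus (min x y) y := by
  rcases lt_or_ge x y with h | h
  · rw [GPlus, if_neg (not_le.2 h), min_eq_left h.le]
  · rw [GPlus, if_pos h, min_eq_right h, gPlus_self hy]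

end

/-- For fixed `y ∈ [0,1]`, the map `x ↦ G₊(x,y)` is concave on `[0,1]`. -/
theorem stmt1 (y : ℝ) (hy : y ∈ Set.Icc (0:ℝ) 1) :
    ConcaveOn ℝ (Set.Icc (0:ℝ) 1) (fun x => GPlus x y) := by
  have hsub : Icc 0 y ⊆ Icc (0 : ℝ) 1 := Icc_subset_Icc_right hy.2
  have hg : ConcaveOn ℝ (Icc 0 y) (gPlus · y) :=
    (concaveOn_gPlus hy).subset hsub (convex_Icc 0 y)
  have hmono : MonotoneOn (gPlus · y) (Icc 0 y) :=
    hg.monotoneOn_of_isMaxOn (isGreatest_Icc hy.1) fun x hx => by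
      simpa only [mem_ofPred_eq, gPlus_self hy] using gPlus_le_one (hsub hx) hy
  have hmin : ConcaveOn ℝ (Icc 0 1) (min · y) :=
    (concaveOn_id (convex_Icc 0 1)).inf (concaveOn_const y (convex_Icc 0 1))
  have hmaps : MapsTo (min · y) (Icc 0 1) (Icc 0 y) := fun x hx =>
    ⟨le_min hx.1 hy.1, min_le_right x y⟩
  exact (hg.comp_of_mapsTo hmin hmono hmaps).congr fun x _ => (GPlus_eq_gPlus_min hy).symm
end

section
/- Let g be a probability density supported on [δ⁻, δ⁺] ⊂ (−1, 1) with ∫ g(δ)·δ dδ = 0, let ᾱ > 0, η ∈ (0,1], and define D = ∫ g(δ) e^{−η ᾱ (1+δ)} dδ. If ζ = max{(δ⁻)², (δ⁺)²} satisfies 1 − 2(1−D)(1+ζ) ≥ 0, then ᾱ < (1 − √(1 − 2(1−D)(1+ζ))) / (η(1+ζ)). -/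
/-!
Since `e^{-t} < 1 - t + t²/2` for `t > 0`, and `g` has unit mass, mean zero and second moment at
most `ζ`, one gets `D < 1 - t + (1 + ζ) t²/2` for every `0 < t ≤ ηᾱ` (the integrand is decreasing
in the intensity). Taking `t = ηᾱ` when `ηᾱ(1 + ζ) < 1`, this says that `ηᾱ` lies below the
smaller root of the quadratic `(1 + ζ) t²/2 - t + 1 - D`. Taking `t = 1/(1 + ζ)` otherwise gives
`D < 1 - 1/(2(1 + ζ))`, which contradicts the assumption that the roots are real.
-/

open MeasureTheory Set

theorem Real.exp_neg_lt_one_sub_add_sq_div_two {t : ℝ} (ht : 0 < t) :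
    Real.exp (-t) < 1 - t + t ^ 2 / 2 := by
  have hexp : 1 + t + t ^ 2 / 2 ≤ Real.exp t := Real.quadratic_le_exp_of_nonneg ht.le
  have hpos : 0 < 1 - t + t ^ 2 / 2 := by nlinarith [sq_nonneg (t - 1)]
  -- `(1 - t + t²/2)(1 + t + t²/2) = 1 + t⁴/4`
  rw [Real.exp_neg, inv_lt_iff_one_lt_mul₀ (Real.exp_pos t)]
  nlinarith [mul_le_mul_of_nonneg_left hexp hpos.le, pow_pos ht 4]

theorem sq_le_max_sq_of_mem_Icc {a b x : ℝ} (hx : x ∈ Icc a b) : x ^ 2 ≤ max (a ^ 2) (b ^ 2) := by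
  rcases le_total 0 x with h | h
  · exact (pow_le_pow_left₀ h hx.2 2).trans (le_max_right _ _)
  · nlinarith [le_max_left (a ^ 2) (b ^ 2), hx.1]

theorem integral_mul_lt_integral_mul_of_lt {X : Type*} [MeasurableSpace X] {μ : Measure X}
    {w f h : X → ℝ} (hw : 0 ≤ w) (hw_pos : 0 < ∫ x, w x ∂μ)
    (hwf : Integrable (fun x ↦ w x * f x) μ) (hwh : Integrable (fun x ↦ w x * h x) μ)
    (hlt : ∀ x, w x ≠ 0 → f x < h x) :
    ∫ x, w x * f x ∂μ < ∫ x, w x * h x ∂μ := by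
  have hw_int : Integrable w μ := Integrable.of_integral_ne_zero hw_pos.ne'
  have hdiff_nonneg : 0 ≤ fun x ↦ w x * h x - w x * f x := fun x ↦ by
    change 0 ≤ w x * h x - w x * f x
    by_cases hx : w x = 0
    · simp [hx]
    · rw [← mul_sub]
      exact mul_nonneg (hw x) (sub_nonneg.2 (hlt x hx).le)
  have hsupp : Function.support (fun x ↦ w x * h x - w x * f x) = Function.support w := by
    ext x
    by_cases hx : w x = 0
    · simp [hx]
    · simp [← mul_sub, hx, sub_eq_zero, (hlt x hx).ne']
  rw [← sub_pos, ← integral_sub hwh hwf, integral_pos_iff_support_of_nonneg hdiff_nonneg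
    (hwh.sub hwf), hsupp, ← integral_pos_iff_support_of_nonneg hw hw_int]
  exact hw_pos

theorem MeasureTheory.Integrable.mul_continuous_of_support_subset_isCompact {g φ : ℝ → ℝ}
    {K : Set ℝ} (hK : IsCompact K) (hsupp : ∀ x, x ∉ K → g x = 0) (hg : Integrable g)
    (hφ : Continuous φ) :
    Integrable (fun x ↦ g x * φ x) := by
  rw [← integrableOn_iff_integrable_of_support_subset (s := K)]
  · exact hg.integrableOn.mul_continuousOn hφ.continuousOn hK
  · intro x hx
    by_contra hxK
    simp [hsupp x hxK] at hx

section NoClickProbability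

variable {g : ℝ → ℝ} {dm dp : ℝ}

theorem integral_mul_affine (hsupp : ∀ x, x ∉ Icc dm dp → g x = 0) (hgint : Integrable g)
    (hnorm : ∫ x, g x = 1) (hmean : ∫ x, g x * x = 0) (A B : ℝ) :
    ∫ x, g x * (A + B * x) = A := by
  have hgx : Integrable (fun x ↦ g x * x) :=
    hgint.mul_continuous_of_support_subset_isCompact isCompact_Icc hsupp continuous_id
  have hexpand : (fun x ↦ g x * (A + B * x)) = fun x ↦ A * g x + B * (g x * x) := by
    ext x; ring
  rw [hexpand, integral_add (hgint.const_mul A) (hgx.const_mul B), integral_const_mul,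
    integral_const_mul, hnorm, hmean]
  ring

theorem integral_mul_exp_neg_lt (hsupp : ∀ x, x ∉ Icc dm dp → g x = 0) (hgint : Integrable g)
    (hdm : -1 < dm) (hg0 : ∀ x, 0 ≤ g x) (hnorm : ∫ x, g x = 1)
    (hmean : ∫ x, g x * x = 0) {x t : ℝ} (ht : 0 < t) (htx : t ≤ x) :
    ∫ δ, g δ * Real.exp (-(x * (1 + δ))) < 1 - t + (1 + max (dm ^ 2) (dp ^ 2)) * t ^ 2 / 2 := by
  set ζ := max (dm ^ 2) (dp ^ 2)
  have hpointwise : ∀ δ, g δ ≠ 0 →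
      Real.exp (-(x * (1 + δ))) < (1 - t + (1 + ζ) * t ^ 2 / 2) + (t ^ 2 - t) * δ := by
    intro δ hδ
    have hδmem : δ ∈ Icc dm dp := by by_contra h; exact hδ (hsupp δ h)
    have hδpos : 0 < 1 + δ := by linarith [hδmem.1]
    have hδsq : δ ^ 2 ≤ ζ := sq_le_max_sq_of_mem_Icc hδmem
    calc Real.exp (-(x * (1 + δ))) ≤ Real.exp (-(t * (1 + δ))) := by
          gcongr
      _ < 1 - t * (1 + δ) + (t * (1 + δ)) ^ 2 / 2 :=
          Real.exp_neg_lt_one_sub_add_sq_div_two (mul_pos ht hδpos)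
      _ ≤ (1 - t + (1 + ζ) * t ^ 2 / 2) + (t ^ 2 - t) * δ := by
          nlinarith [mul_le_mul_of_nonneg_left hδsq (sq_nonneg t)]
  have hcont : Continuous fun δ : ℝ ↦ Real.exp (-(x * (1 + δ))) := by fun_prop
  rw [← integral_mul_affine hsupp hgint hnorm hmean (1 - t + (1 + ζ) * t ^ 2 / 2) (t ^ 2 - t)]
  exact integral_mul_lt_integral_mul_of_lt hg0 (by rw [hnorm]; exact one_pos)
    (hgint.mul_continuous_of_support_subset_isCompact isCompact_Icc hsupp hcont)
    (hgint.mul_continuous_of_support_subset_isCompact isCompact_Icc hsupp (by fun_prop))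
    hpointwise

end NoClickProbability

theorem mul_lt_one_sub_sqrt_of_lt_quadratic {c x D : ℝ} (hc : 0 < c) (hcx : c * x < 1)
    (hD : D < 1 - x + c * x ^ 2 / 2) : c * x < 1 - Real.sqrt (1 - 2 * (1 - D) * c) := by
  have hsqrt : Real.sqrt (1 - 2 * (1 - D) * c) < 1 - c * x :=
    (Real.sqrt_lt' (by linarith)).2 (by nlinarith [mul_pos hc (sub_pos.2 hD)])
  linarith

theorem stmt7_general (g : ℝ → ℝ) (dm dp : ℝ) (hdm : -1 < dm)
    (hg0 : ∀ x, 0 ≤ g x) (hsupp : ∀ x, x ∉ Set.Icc dm dp → g x = 0)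
    (hgint : Integrable g) (hnorm : (∫ x, g x) = 1) (hmean : (∫ x, g x * x) = 0)
    (α η : ℝ) (hα : 0 < α) (hη : 0 < η)
    (D : ℝ) (hD : D = ∫ x, g x * Real.exp (-(η * α * (1 + x))))
    (ζ : ℝ) (hζ : ζ = max (dm^2) (dp^2))
    (hroot : 0 ≤ 1 - 2*(1 - D)*(1 + ζ)) :
    α < (1 - Real.sqrt (1 - 2*(1 - D)*(1 + ζ))) / (η*(1 + ζ)) := by
  have hc : 0 < 1 + ζ := by rw [hζ]; positivity
  have hx : 0 < η * α := mul_pos hη hα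
  have hbound : ∀ t, 0 < t → t ≤ η * α → D < 1 - t + (1 + ζ) * t ^ 2 / 2 := fun t ht htx ↦ by
    rw [hD, hζ]
    exact integral_mul_exp_neg_lt hsupp hgint hdm hg0 hnorm hmean ht htx
  rw [lt_div_iff₀ (mul_pos hη hc)]
  by_cases hcx : (1 + ζ) * (η * α) < 1
  · linarith [mul_lt_one_sub_sqrt_of_lt_quadratic hc hcx (hbound _ hx le_rfl)]
  · exfalso
    have hD_lt : D < 1 - 1 / (2 * (1 + ζ)) := by
      convert hbound (1 / (1 + ζ)) (by positivity) (by rw [div_le_iff₀ hc]; linarith) using 1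
      field_simp
      ring
    rw [lt_sub_comm, div_lt_iff₀ (by positivity)] at hD_lt
    linarith

/-- Upper bound on the conditional mean intensity `ᾱ` from the monitor's no-click probability. -/
theorem stmt7 (g : ℝ → ℝ) (dm dp : ℝ) (hdm : -1 < dm) (hdd : dm ≤ dp) (hdp : dp < 1)
    (hg0 : ∀ x, 0 ≤ g x) (hsupp : ∀ x, x ∉ Set.Icc dm dp → g x = 0)
    (hgint : Integrable g) (hnorm : (∫ x, g x) = 1) (hmean : (∫ x, g x * x) = 0)
    (α η : ℝ) (hα : 0 < α) (hη : 0 < η) (hη1 : η ≤ 1)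
    (D : ℝ) (hD : D = ∫ x, g x * Real.exp (-(η * α * (1 + x))))
    (ζ : ℝ) (hζ : ζ = max (dm^2) (dp^2))
    (hroot : 0 ≤ 1 - 2*(1 - D)*(1 + ζ)) :
    α < (1 - Real.sqrt (1 - 2*(1 - D)*(1 + ζ))) / (η*(1 + ζ)) :=
  stmt7_general g dm dp hdm hg0 hsupp hgint hnorm hmean α η hα hη D hD ζ hζ hroot
end

section
/- Let g be a probability density supported on [δ⁻, δ⁺] ⊂ (−1, 1) with ∫ g(δ)·δ dδ = 0, let ᾱ > 0, and suppose η ∈ (0,1] satisfies 1 − ηᾱ(1 − δ/3) > 0 for all δ ∈ [δ⁻, δ⁺]. Define D = ∫ g(δ) e^{−η ᾱ (1+δ)} dδ. Then D > 1 − ηᾱ + η²ᾱ²/2 − η³ᾱ³/6. -/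
/-!
Since `exp` lies above its tangent line, `g x * exp (b * x) ≥ g x * (1 + b * x)` pointwise, and
integrating against a probability density with zero mean gives `∫ g x * exp (b * x) ≥ 1`
(Jensen's inequality). Hence `D = e^{-ηα} ∫ g x * e^{-ηα x} ≥ e^{-ηα}`, and `e^{-a}` strictly
exceeds its third-order Taylor polynomial for `a > 0`.
-/

open MeasureTheory Real Set Function

lemma one_sub_add_sq_div_two_sub_cube_div_six_lt_exp_neg {y : ℝ} (hy : 0 < y) :
    1 - y + y ^ 2 / 2 - y ^ 3 / 6 < exp (-y) := by
  -- The derivative of `exp t` times the Taylor polynomial telescopes to `-exp t * t ^ 3 / 6`.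
  set h : ℝ → ℝ := fun t ↦ exp t * (1 - t + t ^ 2 / 2 - t ^ 3 / 6)
  have hderiv (t : ℝ) : HasDerivAt h (-(exp t * t ^ 3 / 6)) t := by
    refine ((hasDerivAt_exp t).mul ((((hasDerivAt_const t 1).sub (hasDerivAt_id' t)).add
      ((hasDerivAt_pow 2 t).div_const 2)).sub ((hasDerivAt_pow 3 t).div_const 6))).congr_deriv ?_
    simp only [Pi.add_apply, Pi.sub_apply, Nat.cast_ofNat]
    ring
  have hanti : StrictAntiOn h (Ici 0) := by
    refine strictAntiOn_of_deriv_neg (convex_Ici 0)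
      (fun t _ ↦ (hderiv t).continuousAt.continuousWithinAt) fun t ht ↦ ?_
    rw [interior_Ici] at ht
    rw [(hderiv t).deriv, neg_neg_iff_pos]
    exact div_pos (mul_pos (exp_pos t) (pow_pos ht 3)) (by norm_num)
  have hlt : h y < 1 := by
    simpa [h] using hanti self_mem_Ici hy.le hy
  calc 1 - y + y ^ 2 / 2 - y ^ 3 / 6 = exp (-y) * h y := by
        rw [← mul_assoc, ← exp_add, neg_add_cancel, exp_zero, one_mul]
    _ < exp (-y) := mul_lt_of_lt_one_right (exp_pos _) hlt

lemma MeasureTheory.Integrable.mul_of_support_subset_isCompact {X : Type*} [TopologicalSpace X]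
    [T2Space X] [MeasurableSpace X] [OpensMeasurableSpace X] {μ : Measure X} {g f : X → ℝ} {K : Set X}
    (hg : Integrable g μ) (hK : IsCompact K) (hgK : support g ⊆ K) (hf : ContinuousOn f K) :
    Integrable (fun x ↦ g x * f x) μ :=
  (integrableOn_iff_integrable_of_support_subset ((support_mul_subset_left g f).trans hgK)).mp
    (hg.integrableOn.mul_continuousOn hf hK)

lemma one_le_integral_mul_exp_of_integral_mul_id_eq_zero {μ : Measure ℝ} {g : ℝ → ℝ} (b : ℝ)
    (hg0 : ∀ x, 0 ≤ g x) (hg : Integrable g μ) (hgx : Integrable (fun x ↦ g x * x) μ)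
    (hge : Integrable (fun x ↦ g x * exp (b * x)) μ) (hnorm : ∫ x, g x ∂μ = 1)
    (hmean : ∫ x, g x * x ∂μ = 0) : 1 ≤ ∫ x, g x * exp (b * x) ∂μ := by
  calc 1 = ∫ x, g x + b * (g x * x) ∂μ := by
        rw [integral_add hg (hgx.const_mul b), integral_const_mul, hnorm, hmean, mul_zero, add_zero]
    _ ≤ ∫ x, g x * exp (b * x) ∂μ := by
        refine integral_mono (hg.add (hgx.const_mul b)) hge fun x ↦ ?_
        have htangent := add_one_le_exp (b * x)
        calc g x + b * (g x * x) = g x * (b * x + 1) := by ring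
          _ ≤ g x * exp (b * x) := mul_le_mul_of_nonneg_left htangent (hg0 x)

theorem stmt9_general (g : ℝ → ℝ) (dm dp : ℝ)
    (hg0 : ∀ x, 0 ≤ g x) (hsupp : ∀ x, x ∉ Set.Icc dm dp → g x = 0)
    (hgint : Integrable g) (hnorm : (∫ x, g x) = 1) (hmean : (∫ x, g x * x) = 0)
    (α η : ℝ) (hα : 0 < α) (hη : 0 < η)
    (D : ℝ) (hD : D = ∫ x, g x * Real.exp (-(η * α * (1 + x)))) :
    1 - η*α + η^2*α^2/2 - η^3*α^3/6 < D := by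
  have hK : support g ⊆ Icc dm dp := fun x hx ↦ by_contra fun hx' ↦ hx (hsupp x hx')
  have hint {f : ℝ → ℝ} (hf : Continuous f) : Integrable (fun x ↦ g x * f x) :=
    hgint.mul_of_support_subset_isCompact isCompact_Icc hK hf.continuousOn
  have hJensen := one_le_integral_mul_exp_of_integral_mul_id_eq_zero (-(η * α)) hg0 hgint
    (hint continuous_id) (hint (by fun_prop)) hnorm hmean
  have hD' : D = exp (-(η * α)) * ∫ x, g x * exp (-(η * α) * x) := by
    rw [hD, ← integral_const_mul]
    congr 1 with x
    rw [mul_left_comm, ← exp_add]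
    ring_nf
  calc 1 - η*α + η^2*α^2/2 - η^3*α^3/6 < exp (-(η * α)) := by
        simpa only [mul_pow] using
          one_sub_add_sq_div_two_sub_cube_div_six_lt_exp_neg (mul_pos hη hα)
    _ ≤ D := hD' ▸ le_mul_of_one_le_right (exp_pos _).le hJensen

/-- Third-order lower bound on the no-click probability `D`. -/
theorem stmt9 (g : ℝ → ℝ) (dm dp : ℝ) (hdm : -1 < dm) (hdd : dm ≤ dp) (hdp : dp < 1)
    (hg0 : ∀ x, 0 ≤ g x) (hsupp : ∀ x, x ∉ Set.Icc dm dp → g x = 0)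
    (hgint : Integrable g) (hnorm : (∫ x, g x) = 1) (hmean : (∫ x, g x * x) = 0)
    (α η : ℝ) (hα : 0 < α) (hη : 0 < η) (hη1 : η ≤ 1)
    (hpos : ∀ δ ∈ Set.Icc dm dp, 0 < 1 - η*α*(1 - δ/3))
    (D : ℝ) (hD : D = ∫ x, g x * Real.exp (-(η * α * (1 + x)))) :
    1 - η*α + η^2*α^2/2 - η^3*α^3/6 < D :=
  stmt9_general g dm dp hg0 hsupp hgint hnorm hmean α η hα hη D hD
end
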